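/- Let p_x(x) = −(1/2)sgn(x)e^{−|x|} and u_a(t,x) = a e^{−|x−ct|}. Then for x > ct, p_x * [(k₁ + 3k₂/2)u_a(∂_x u_a)² + (7k₁/9 + 7k₂/6)u_a³ + k₃u_a² + (k₃/2)(∂_x u_a)²](x) = a³(2k₁/3 + k₂)(e^{3(ct−x)} − e^{ct−x}) + a²k₃(e^{2(ct−x)} − e^{ct−x}). -/

import Mathlib

open MeasureTheory Real

/-- `p_x(x) = -(1/2) sgn(x) e^{-|x|}`. -/
noncomputable def pxker (x : ℝ) : ℝ := -(1/2) * Real.sign x * Real.exp (-|x|)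

/-- The peakon `u_a(t,x) = a e^{-|x-ct|}`. -/
noncomputable def upk (a c t x : ℝ) : ℝ := a * Real.exp (-|x - c*t|)

/-- The (a.e.) spatial derivative of the peakon: `∂_x u_a = -sgn(x-ct) u_a`. -/
noncomputable def upkx (a c t x : ℝ) : ℝ := -(Real.sign (x - c*t)) * upk a c t x

/-!
Off the peak `y = ct` we have `(∂ₓu_a)² = u_a²`, so the bracket is a.e. equal to
`(16k₁/9 + 8k₂/3) a³ e^{-3|y-ct|} + (3k₃/2) a² e^{-2|y-ct|}`. For `s < x` and `n > 1` the
function `y ↦ p_x(x - y) e^{-n|y-s|}` is a single exponential on each of `(-∞, s]`, `(s, x)`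
and `(x, ∞)`; adding up the three elementary integrals gives `n/(n²-1) (e^{n(s-x)} - e^{s-x})`,
and `n = 3, 2` yield the two terms of the formula.
-/

open Set

theorem integral_exp_mul_Ioo {b : ℝ} (hb : b ≠ 0) {s x : ℝ} (hsx : s ≤ x) :
    ∫ y in Ioo s x, exp (b * y) = (exp (b * x) - exp (b * s)) / b := by
  rw [← integral_Ioc_eq_integral_Ioo, ← intervalIntegral.integral_of_le hsx,
    intervalIntegral.integral_comp_mul_left (fun y => exp y) hb, integral_exp, smul_eq_mul]
  field_simp

theorem integrable_and_integral_eq_of_eqOn_exp_Iic_Ioo_Ioi {f : ℝ → ℝ}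
    {s x b₁ b₂ b₃ c₁ c₂ c₃ : ℝ} (hsx : s ≤ x) (hb₁ : 0 < b₁) (hb₂ : b₂ ≠ 0) (hb₃ : b₃ < 0)
    (h₁ : EqOn f (fun y => c₁ * exp (b₁ * y)) (Iic s))
    (h₂ : EqOn f (fun y => c₂ * exp (b₂ * y)) (Ioo s x))
    (h₃ : EqOn f (fun y => c₃ * exp (b₃ * y)) (Ioi x)) :
    Integrable f ∧ ∫ y, f y = c₁ * exp (b₁ * s) / b₁
      + c₂ * (exp (b₂ * x) - exp (b₂ * s)) / b₂ - c₃ * exp (b₃ * x) / b₃ := by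
  have i₁ : IntegrableOn f (Iic s) := IntegrableOn.congr_fun
    ((integrableOn_exp_mul_Iic hb₁ s).const_mul c₁) h₁.symm measurableSet_Iic
  have i₂ : IntegrableOn f (Ioc s x) := by
    rw [integrableOn_Ioc_iff_integrableOn_Ioo]
    refine IntegrableOn.congr_fun ?_ h₂.symm measurableSet_Ioo
    exact (by fun_prop : Continuous fun y => c₂ * exp (b₂ * y)).integrableOn_Icc.mono_set
      Ioo_subset_Icc_self
  have i₃ : IntegrableOn f (Ioi x) := IntegrableOn.congr_fun
    ((integrableOn_exp_mul_Ioi hb₃ x).const_mul c₃) h₃.symm measurableSet_Ioi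
  have i₂₃ : IntegrableOn f (Ioi s) := by
    rw [← Ioc_union_Ioi_eq_Ioi hsx]; exact i₂.union i₃
  refine ⟨integrableOn_univ.mp (by rw [← Iic_union_Ioi (a := s)]; exact i₁.union i₂₃), ?_⟩
  rw [← intervalIntegral.integral_Iic_add_Ioi i₁ i₂₃, ← Ioc_union_Ioi_eq_Ioi hsx,
    setIntegral_union (Ioc_disjoint_Ioi le_rfl) measurableSet_Ioi i₂ i₃,
    integral_Ioc_eq_integral_Ioo, setIntegral_congr_fun measurableSet_Iic h₁,
    setIntegral_congr_fun measurableSet_Ioo h₂, setIntegral_congr_fun measurableSet_Ioi h₃,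
    integral_const_mul, integral_const_mul, integral_const_mul, integral_exp_mul_Iic hb₁,
    integral_exp_mul_Ioo hb₂ hsx, integral_exp_mul_Ioi hb₃]
  ring

theorem pxker_of_pos {z : ℝ} (hz : 0 < z) : pxker z = -(1 / 2) * exp (-z) := by
  rw [pxker, sign_of_pos hz, abs_of_pos hz]; ring

theorem pxker_of_neg {z : ℝ} (hz : z < 0) : pxker z = 1 / 2 * exp z := by
  rw [pxker, sign_of_neg hz, abs_of_neg hz, neg_neg]; ring

theorem integrable_and_integral_pxker_sub_mul_exp {s x n : ℝ} (hsx : s < x) (hn : 1 < n) :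
    Integrable (fun y => pxker (x - y) * exp (-(n * |y - s|))) ∧
    ∫ y, pxker (x - y) * exp (-(n * |y - s|))
      = n / (n ^ 2 - 1) * (exp (n * (s - x)) - exp (s - x)) := by
  have hb₂ : 1 - n ≠ 0 := by linarith
  refine (integrable_and_integral_eq_of_eqOn_exp_Iic_Ioo_Ioi hsx.le (by linarith : 0 < 1 + n) hb₂
    (by linarith : -(1 + n) < 0) (c₁ := -(1 / 2) * exp (-x - n * s))
    (c₂ := -(1 / 2) * exp (n * s - x)) (c₃ := 1 / 2 * exp (x + n * s)) ?_ ?_ ?_).imp_right ?_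
  · intro y (hy : y ≤ s)
    dsimp only
    rw [pxker_of_pos (by linarith : 0 < x - y), abs_of_nonpos (by linarith : y - s ≤ 0),
      mul_assoc, ← exp_add, mul_assoc, ← exp_add]
    ring_nf
  · intro y ⟨hsy, hyx⟩
    dsimp only
    rw [pxker_of_pos (by linarith : 0 < x - y), abs_of_pos (by linarith : 0 < y - s),
      mul_assoc, ← exp_add, mul_assoc, ← exp_add]
    ring_nf
  · intro y (hy : x < y)
    dsimp only
    rw [pxker_of_neg (by linarith : x - y < 0), abs_of_pos (by linarith : 0 < y - s),
      mul_assoc, ← exp_add, mul_assoc, ← exp_add]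
    ring_nf
  · intro h
    rw [h]
    simp only [mul_assoc, mul_sub, ← exp_add]
    rw [show -x - n * s + (1 + n) * s = s - x by ring,
      show n * s - x + (1 - n) * x = n * (s - x) by ring,
      show n * s - x + (1 - n) * s = s - x by ring,
      show x + n * s + -(1 + n) * x = n * (s - x) by ring]
    have hn2 : n ^ 2 - 1 ≠ 0 := by nlinarith
    have h1n : 1 + n ≠ 0 := by linarith
    field_simp
    ring

theorem upk_pow (a c t y : ℝ) (n : ℕ) : upk a c t y ^ n = a ^ n * exp (-(n * |y - c * t|)) := by
  rw [upk, mul_pow, ← exp_nat_mul, mul_neg]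

theorem upkx_sq_of_ne {a c t y : ℝ} (hy : y ≠ c * t) : upkx a c t y ^ 2 = upk a c t y ^ 2 := by
  rcases sign_apply_eq_of_ne_zero _ (sub_ne_zero.2 hy) with h | h <;> simp [upkx, h]

theorem peakon_convolution_formula_general (a c k₁ k₂ k₃ : ℝ) :
    ∀ t x : ℝ, c*t < x →
      (∫ y : ℝ, pxker (x - y) *
          ((k₁ + 3*k₂/2) * upk a c t y * (upkx a c t y)^2
            + (7*k₁/9 + 7*k₂/6) * (upk a c t y)^3
            + k₃ * (upk a c t y)^2
            + (k₃/2) * (upkx a c t y)^2))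
      = a^3 * (2*k₁/3 + k₂) * (Real.exp (3*(c*t - x)) - Real.exp (c*t - x))
        + a^2 * k₃ * (Real.exp (2*(c*t - x)) - Real.exp (c*t - x)) := by
  intro t x hx
  obtain ⟨hint₃, hconv₃⟩ := integrable_and_integral_pxker_sub_mul_exp hx (n := 3) (by norm_num)
  obtain ⟨hint₂, hconv₂⟩ := integrable_and_integral_pxker_sub_mul_exp hx (n := 2) (by norm_num)
  have hae : (fun y => pxker (x - y) *
          ((k₁ + 3*k₂/2) * upk a c t y * (upkx a c t y)^2
            + (7*k₁/9 + 7*k₂/6) * (upk a c t y)^3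
            + k₃ * (upk a c t y)^2
            + (k₃/2) * (upkx a c t y)^2))
      =ᵐ[volume] fun y =>
        (16 * k₁ / 9 + 8 * k₂ / 3) * a ^ 3 * (pxker (x - y) * exp (-(3 * |y - c * t|)))
          + 3 * k₃ / 2 * a ^ 2 * (pxker (x - y) * exp (-(2 * |y - c * t|))) := by
    filter_upwards [Measure.ae_ne volume (c * t)] with y hy
    have h₃ := upk_pow a c t y 3
    have h₂ := upk_pow a c t y 2
    push_cast at h₃ h₂
    rw [upkx_sq_of_ne hy]
    linear_combination pxker (x - y) * ((16 * k₁ / 9 + 8 * k₂ / 3) * h₃ + 3 * k₃ / 2 * h₂)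
  rw [integral_congr_ae hae, integral_add (hint₃.const_mul _) (hint₂.const_mul _),
    integral_const_mul, integral_const_mul, hconv₃, hconv₂]
  ring

/-- For `x > ct`,
`p_x * [(k₁+3k₂/2)u_a(∂_x u_a)² + (7k₁/9+7k₂/6)u_a³ + k₃u_a² + (k₃/2)(∂_x u_a)²](x)
 = a³(2k₁/3+k₂)(e^{3(ct-x)} - e^{ct-x}) + a²k₃(e^{2(ct-x)} - e^{ct-x})`. -/
theorem peakon_convolution_formula (a c k₁ k₂ k₃ : ℝ) (ha : a ≠ 0) :
    ∀ t x : ℝ, c*t < x →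
      (∫ y : ℝ, pxker (x - y) *
          ((k₁ + 3*k₂/2) * upk a c t y * (upkx a c t y)^2
            + (7*k₁/9 + 7*k₂/6) * (upk a c t y)^3
            + k₃ * (upk a c t y)^2
            + (k₃/2) * (upkx a c t y)^2))
      = a^3 * (2*k₁/3 + k₂) * (Real.exp (3*(c*t - x)) - Real.exp (c*t - x))
        + a^2 * k₃ * (Real.exp (2*(c*t - x)) - Real.exp (c*t - x)) :=
  peakon_convolution_formula_general a c k₁ k₂ k₃
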